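/- arXiv:2407.00058 — 2 statements merged into one kernel-verified Lean document; each statement's English description precedes it below -/
import Mathlib

section
/- For every odd prime p, the formal power series identity F_{p-1}(q) = ψ(q) · ∏_{i≥1} ψ(q^{2^i})^{p·2^{i-1}} holds, where F_{p-1}(q) = ∏_{j≥1} 1/((1-q^j)(1-q^{2j})^{p-2}) and ψ(q) = ∏_{j≥1}(1-q^{2j})^2/(1-q^j). -/
open PowerSeries

/-- The infinite product `∏_{j ≥ 1} g j` of formal power series, for families where the
factor `g j` is `≡ 1 (mod q^j)`, so that the coefficient of `q^n` is that of the
finite product over `1 ≤ j ≤ n`. -/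
noncomputable def iprod (g : ℕ → PowerSeries ℚ) : PowerSeries ℚ :=
  PowerSeries.mk fun n => coeff n (∏ j ∈ Finset.Icc 1 n, g j)

/-- `F_{p-1}(q) = ∏_{j≥1} 1/((1-q^j)(1-q^{2j})^{p-2})`. -/
noncomputable def F (c : ℕ) : PowerSeries ℚ :=
  iprod (fun j => ((1 - (X : PowerSeries ℚ) ^ j) * (1 - X ^ (2 * j)) ^ (c - 1))⁻¹)

/-- `ψ(q^m) = ∏_{j≥1} (1-q^{2mj})^2/(1-q^{mj})`. -/
noncomputable def psiM (m : ℕ) : PowerSeries ℚ :=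
  iprod (fun j => (1 - (X : PowerSeries ℚ) ^ (2 * m * j)) ^ 2 * (1 - X ^ (m * j))⁻¹)

/-!
With `f_m = ∏_{j≥1} (1 - q^{mj})`, the definitions give `ψ(q^m) f_m = f_{2m}^2` and
`F_{p-1} f_1 f_2^{p-2} = 1`, hence `ψ(q) = F_{p-1} f_2^p`. Multiplying in the factors
`ψ(q^{2^i})^{p 2^{i-1}}` one at a time telescopes to
`ψ(q) ∏_{i=1}^{N} ψ(q^{2^i})^{p 2^{i-1}} = F_{p-1} f_{2^{N+1}}^{p 2^N}`,
and `f_{2^{N+1}} ≡ 1 (mod q^{2^{N+1}})`, so letting `N → ∞` gives the identity `q`-adically.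
-/

section DvdSubOne

variable {R : Type*} [CommRing R] {d : R}

theorem dvd_sub_one_iff_mk_eq_one {a : R} :
    d ∣ a - 1 ↔ Ideal.Quotient.mk (Ideal.span {d}) a = 1 := by
  rw [← map_one (Ideal.Quotient.mk _), Ideal.Quotient.eq, Ideal.mem_span_singleton]

theorem dvd_mul_sub_one {a b : R} (ha : d ∣ a - 1) (hb : d ∣ b - 1) : d ∣ a * b - 1 := by
  rw [dvd_sub_one_iff_mk_eq_one] at ha hb ⊢
  rw [map_mul, ha, hb, one_mul]

theorem dvd_pow_sub_one {a : R} (ha : d ∣ a - 1) (e : ℕ) : d ∣ a ^ e - 1 := by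
  rw [dvd_sub_one_iff_mk_eq_one] at ha ⊢
  rw [map_pow, ha, one_pow]

theorem dvd_prod_sub_one {ι : Type*} {s : Finset ι} {g : ι → R} (h : ∀ i ∈ s, d ∣ g i - 1) :
    d ∣ ∏ i ∈ s, g i - 1 := by
  rw [dvd_sub_one_iff_mk_eq_one, map_prod]
  exact Finset.prod_eq_one fun i hi => dvd_sub_one_iff_mk_eq_one.mp (h i hi)

end DvdSubOne

namespace PowerSeries

section CommRing

variable {R : Type*} [CommRing R]

theorem coeff_eq_of_X_pow_dvd_sub {c k : ℕ} {A B : R⟦X⟧} (h : X ^ c ∣ A - B) (hk : k < c) :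
    coeff k A = coeff k B := by
  rw [← sub_eq_zero, ← map_sub]
  exact X_pow_dvd_iff.mp h k hk

theorem eq_of_forall_X_pow_dvd_sub {A B : R⟦X⟧} (h : ∀ n, X ^ (n + 1) ∣ A - B) : A = B :=
  ext fun n => coeff_eq_of_X_pow_dvd_sub (h n) n.lt_succ_self

theorem X_pow_dvd_one_sub_X_pow_sub_one {c k : ℕ} (h : c ≤ k) :
    (X : R⟦X⟧) ^ c ∣ (1 - X ^ k) - 1 := by
  rw [sub_sub_cancel_left]
  exact (pow_dvd_pow X h).neg_right

theorem constantCoeff_eq_one_of_X_pow_dvd_sub_one {c : ℕ} {φ : R⟦X⟧} (hc : 1 ≤ c)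
    (h : X ^ c ∣ φ - 1) : constantCoeff φ = 1 := by
  rw [← sub_eq_zero, ← map_one constantCoeff, ← map_sub, ← X_dvd_iff]
  exact (dvd_pow_self X (by omega)).trans h

end CommRing

theorem X_pow_dvd_inv_sub_one {k : Type*} [Field k] {c : ℕ} {φ : k⟦X⟧}
    (h : X ^ c ∣ φ - 1) : X ^ c ∣ φ⁻¹ - 1 := by
  rcases Nat.eq_zero_or_pos c with rfl | hc
  · exact pow_zero (X : k⟦X⟧) ▸ one_dvd _
  have hφ := constantCoeff_eq_one_of_X_pow_dvd_sub_one hc h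
  have : φ⁻¹ - 1 = -(φ - 1) * φ⁻¹ := by
    rw [neg_sub, sub_mul, one_mul, φ.mul_inv_cancel (by simp [hφ])]
  rw [this]
  exact h.neg_right.mul_right _

end PowerSeries

def IprodAdmissible (g : ℕ → ℚ⟦X⟧) : Prop :=
  ∀ j, 1 ≤ j → (X : ℚ⟦X⟧) ^ j ∣ g j - 1

namespace IprodAdmissible

variable {g h : ℕ → ℚ⟦X⟧}

theorem mul (hg : IprodAdmissible g) (hh : IprodAdmissible h) :
    IprodAdmissible fun j => g j * h j :=
  fun j hj => dvd_mul_sub_one (hg j hj) (hh j hj)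

theorem pow (hg : IprodAdmissible g) (e : ℕ) : IprodAdmissible fun j => g j ^ e :=
  fun j hj => dvd_pow_sub_one (hg j hj) e

theorem inv (hg : IprodAdmissible g) : IprodAdmissible fun j => (g j)⁻¹ :=
  fun j hj => X_pow_dvd_inv_sub_one (hg j hj)

theorem inv_mul_cancel (hg : IprodAdmissible g) {j : ℕ} (hj : 1 ≤ j) : (g j)⁻¹ * g j = 1 :=
  PowerSeries.inv_mul_cancel _ <| by
    rw [constantCoeff_eq_one_of_X_pow_dvd_sub_one hj (hg j hj)]
    exact one_ne_zero

theorem one_sub_X_pow_mul {m : ℕ} (hm : 1 ≤ m) :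
    IprodAdmissible fun j => 1 - X ^ (m * j) :=
  fun j _ => X_pow_dvd_one_sub_X_pow_sub_one (Nat.le_mul_of_pos_left j hm)

end IprodAdmissible

section Iprod

variable {g h : ℕ → ℚ⟦X⟧}

theorem coeff_iprod (g : ℕ → ℚ⟦X⟧) (n : ℕ) :
    coeff n (iprod g) = coeff n (∏ j ∈ Finset.Icc 1 n, g j) :=
  coeff_mk _ _

theorem X_pow_succ_dvd_prod_Icc_sub_prod_Icc (hg : IprodAdmissible g) {k n : ℕ} (hkn : k ≤ n) :
    (X : ℚ⟦X⟧) ^ (k + 1) ∣ ∏ j ∈ Finset.Icc 1 n, g j - ∏ j ∈ Finset.Icc 1 k, g j := by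
  have htail : (X : ℚ⟦X⟧) ^ (k + 1) ∣ ∏ j ∈ Finset.Ioc k n, g j - 1 :=
    dvd_prod_sub_one fun j hj =>
      (pow_dvd_pow X (Finset.mem_Ioc.mp hj).1).trans (hg j (by grind))
  simp only [show ∀ m, Finset.Icc 1 m = Finset.Ioc 0 m from Finset.Icc_add_one_left_eq_Ioc 0]
  rw [← Finset.prod_Ioc_consecutive g k.zero_le hkn, ← mul_sub_one]
  exact htail.mul_left _

theorem X_pow_succ_dvd_iprod_sub_prod_Icc (hg : IprodAdmissible g) (n : ℕ) :
    (X : ℚ⟦X⟧) ^ (n + 1) ∣ iprod g - ∏ j ∈ Finset.Icc 1 n, g j := by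
  refine X_pow_dvd_iff.mpr fun k hk => ?_
  rw [map_sub, sub_eq_zero, coeff_iprod]
  exact (coeff_eq_of_X_pow_dvd_sub
    (X_pow_succ_dvd_prod_Icc_sub_prod_Icc hg (Nat.le_of_lt_succ hk)) k.lt_succ_self).symm

theorem iprod_eq_of_forall_X_pow_dvd_sub (hg : IprodAdmissible g) {A : ℚ⟦X⟧}
    (hA : ∀ n, (X : ℚ⟦X⟧) ^ (n + 1) ∣ A - ∏ j ∈ Finset.Icc 1 n, g j) : iprod g = A :=
  eq_of_forall_X_pow_dvd_sub fun n => by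
    rw [← sub_sub_sub_cancel_right _ A (∏ j ∈ Finset.Icc 1 n, g j)]
    exact dvd_sub (X_pow_succ_dvd_iprod_sub_prod_Icc hg n) (hA n)

theorem iprod_congr (hgh : ∀ j, 1 ≤ j → g j = h j) : iprod g = iprod h := by
  ext n
  rw [coeff_iprod, coeff_iprod, Finset.prod_congr rfl fun j hj => hgh j (Finset.mem_Icc.mp hj).1]

theorem iprod_one : iprod (fun _ => 1) = 1 := by
  ext n
  rw [coeff_iprod, Finset.prod_const_one]

theorem iprod_mul (hg : IprodAdmissible g) (hh : IprodAdmissible h) :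
    iprod g * iprod h = iprod fun j => g j * h j := by
  refine (iprod_eq_of_forall_X_pow_dvd_sub (hg.mul hh) fun n => ?_).symm
  have : iprod g * iprod h - ∏ j ∈ Finset.Icc 1 n, g j * h j =
      iprod g * (iprod h - ∏ j ∈ Finset.Icc 1 n, h j) +
        (iprod g - ∏ j ∈ Finset.Icc 1 n, g j) * ∏ j ∈ Finset.Icc 1 n, h j := by
    rw [Finset.prod_mul_distrib]; ring
  rw [this]
  exact dvd_add ((X_pow_succ_dvd_iprod_sub_prod_Icc hh n).mul_left _)
    ((X_pow_succ_dvd_iprod_sub_prod_Icc hg n).mul_right _)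

theorem iprod_pow (hg : IprodAdmissible g) (e : ℕ) : iprod g ^ e = iprod fun j => g j ^ e := by
  induction e with
  | zero => simp only [pow_zero, iprod_one]
  | succ e ih => simp only [pow_succ, ih, iprod_mul (hg.pow e) hg]

theorem X_pow_dvd_iprod_sub_one {c : ℕ} (h : ∀ j, 1 ≤ j → (X : ℚ⟦X⟧) ^ c ∣ g j - 1) :
    (X : ℚ⟦X⟧) ^ c ∣ iprod g - 1 := by
  refine X_pow_dvd_iff.mpr fun k hk => ?_
  rw [map_sub, sub_eq_zero, coeff_iprod]
  exact coeff_eq_of_X_pow_dvd_sub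
    (dvd_prod_sub_one fun j hj => h j (Finset.mem_Icc.mp hj).1) hk

end Iprod

noncomputable def fM (m : ℕ) : ℚ⟦X⟧ :=
  iprod fun j => 1 - X ^ (m * j)

theorem X_pow_dvd_fM_sub_one (m : ℕ) : (X : ℚ⟦X⟧) ^ m ∣ fM m - 1 :=
  X_pow_dvd_iprod_sub_one fun _ hj =>
    X_pow_dvd_one_sub_X_pow_sub_one (Nat.le_mul_of_pos_right m hj)

theorem X_pow_dvd_psiM_factor_sub_one (m j : ℕ) :
    (X : ℚ⟦X⟧) ^ (m * j) ∣ (1 - X ^ (2 * m * j)) ^ 2 * (1 - X ^ (m * j))⁻¹ - 1 := by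
  rw [mul_assoc]
  exact dvd_mul_sub_one (dvd_pow_sub_one (X_pow_dvd_one_sub_X_pow_sub_one (by omega)) 2)
    (X_pow_dvd_inv_sub_one (X_pow_dvd_one_sub_X_pow_sub_one le_rfl))

theorem IprodAdmissible.psiM_factor {m : ℕ} (hm : 1 ≤ m) :
    IprodAdmissible fun j => (1 - X ^ (2 * m * j)) ^ 2 * (1 - X ^ (m * j))⁻¹ := fun j _ =>
  (pow_dvd_pow X (Nat.le_mul_of_pos_left j hm)).trans (X_pow_dvd_psiM_factor_sub_one m j)

theorem X_pow_dvd_psiM_sub_one (m : ℕ) : (X : ℚ⟦X⟧) ^ m ∣ psiM m - 1 :=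
  X_pow_dvd_iprod_sub_one fun j hj =>
    (pow_dvd_pow X (Nat.le_mul_of_pos_right m hj)).trans (X_pow_dvd_psiM_factor_sub_one m j)

theorem psiM_mul_fM {m : ℕ} (hm : 1 ≤ m) : psiM m * fM m = fM (2 * m) ^ 2 := by
  have hf := IprodAdmissible.one_sub_X_pow_mul hm
  rw [psiM, fM, iprod_mul (.psiM_factor hm) hf, fM,
    iprod_pow (.one_sub_X_pow_mul (by omega)) 2]
  refine iprod_congr fun j hj => ?_
  rw [mul_assoc, hf.inv_mul_cancel hj, mul_one]

theorem F_mul_fM_mul_fM_pow (c : ℕ) : F c * (fM 1 * fM 2 ^ (c - 1)) = 1 := by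
  have hf₁ := IprodAdmissible.one_sub_X_pow_mul (le_refl 1)
  have hf₂ := IprodAdmissible.one_sub_X_pow_mul one_le_two
  have hw := hf₁.mul (hf₂.pow (c - 1))
  simp only [one_mul] at hw
  rw [fM, fM, iprod_pow hf₂, iprod_mul hf₁ (hf₂.pow (c - 1))]
  simp only [one_mul]
  unfold F
  rw [iprod_mul hw.inv hw, iprod_congr fun j hj => hw.inv_mul_cancel hj, iprod_one]

theorem psiM_one_eq {p : ℕ} (hp : 2 ≤ p) : psiM 1 = F (p - 1) * fM 2 ^ p := by
  have hψ : psiM 1 * fM 1 = fM 2 ^ 2 := psiM_mul_fM (le_refl 1)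
  have hF : F (p - 1) * (fM 1 * fM 2 ^ (p - 2)) = 1 := F_mul_fM_mul_fM_pow (p - 1)
  calc psiM 1 = psiM 1 * (F (p - 1) * (fM 1 * fM 2 ^ (p - 2))) := by rw [hF, mul_one]
    _ = F (p - 1) * (fM 2 ^ (p - 2) * (psiM 1 * fM 1)) := by ring
    _ = F (p - 1) * fM 2 ^ p := by rw [hψ, ← pow_add, Nat.sub_add_cancel hp]

theorem psiM_one_mul_prod_psiM_pow {p : ℕ} (hp : 2 ≤ p) (N : ℕ) :
    psiM 1 * ∏ i ∈ Finset.Icc 1 N, psiM (2 ^ i) ^ (p * 2 ^ (i - 1)) =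
      F (p - 1) * fM (2 ^ (N + 1)) ^ (p * 2 ^ N) := by
  induction N with
  | zero => simp [psiM_one_eq hp]
  | succ N ih =>
    have hψ : psiM (2 ^ (N + 1)) * fM (2 ^ (N + 1)) = fM (2 ^ (N + 2)) ^ 2 := by
      rw [psiM_mul_fM Nat.one_le_two_pow, ← pow_succ']
    calc psiM 1 * ∏ i ∈ Finset.Icc 1 (N + 1), psiM (2 ^ i) ^ (p * 2 ^ (i - 1))
        = F (p - 1) * (psiM (2 ^ (N + 1)) * fM (2 ^ (N + 1))) ^ (p * 2 ^ N) := by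
          rw [Finset.prod_Icc_succ_top (by omega), ← mul_assoc, ih, Nat.add_sub_cancel]
          ring
      _ = F (p - 1) * fM (2 ^ (N + 2)) ^ (p * 2 ^ (N + 1)) := by
          rw [hψ, ← pow_mul, pow_succ 2 N]
          ring_nf

theorem F_pred_prime_product_general (p : ℕ) (hp : p.Prime) :
    F (p - 1) = psiM 1 * iprod (fun i => (psiM (2 ^ i)) ^ (p * 2 ^ (i - 1))) := by
  have hG : IprodAdmissible fun i => psiM (2 ^ i) ^ (p * 2 ^ (i - 1)) := fun i _ =>
    (pow_dvd_pow X Nat.lt_two_pow_self.le).trans (dvd_pow_sub_one (X_pow_dvd_psiM_sub_one _) _)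
  refine eq_of_forall_X_pow_dvd_sub fun n => ?_
  have htail : (X : ℚ⟦X⟧) ^ (n + 1) ∣ F (p - 1) - F (p - 1) * fM (2 ^ (n + 1)) ^ (p * 2 ^ n) := by
    rw [dvd_sub_comm, ← mul_sub_one]
    exact ((pow_dvd_pow X Nat.lt_two_pow_self.le).trans
      (dvd_pow_sub_one (X_pow_dvd_fM_sub_one _) _)).mul_left _
  have hhead := (X_pow_succ_dvd_iprod_sub_prod_Icc hG n).mul_left (psiM 1)
  rw [mul_sub, psiM_one_mul_prod_psiM_pow hp.two_le n] at hhead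
  rw [← sub_sub_sub_cancel_right _ _ (F (p - 1) * fM (2 ^ (n + 1)) ^ (p * 2 ^ n))]
  exact dvd_sub htail hhead

/-- For an odd prime `p`, `F_{p-1}(q) = ψ(q) ∏_{i≥1} ψ(q^{2^i})^{p·2^{i-1}}`. -/
theorem F_pred_prime_product (p : ℕ) (hp : p.Prime) (hodd : Odd p) :
    F (p - 1) = psiM 1 * iprod (fun i => (psiM (2 ^ i)) ^ (p * 2 ^ (i - 1))) :=
  F_pred_prime_product_general p hp
end

section
/- Let p ≥ 3 be prime and let r with 1 ≤ r ≤ p-1 be such that a_{p-1}(pn+r) ≡ 0 (mod p) for all n ≥ 0. Then for every positive integer k and all n ≥ 0, a_{kp-1}(pn+r) ≡ 0 (mod p). -/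
/-- The set of generalized cubic partitions of `n` with `c` colors for even parts:
a partition is encoded as a multiset of (part, color) pairs, where each part is positive,
even parts carry a color `< c`, and odd parts carry the single color `0`. -/
def cubicPartitionSet (c n : ℕ) : Set (Multiset (ℕ × ℕ)) :=
  {M | (∀ x ∈ M, 0 < x.1 ∧ (if Even x.1 then x.2 < c else x.2 = 0)) ∧
    (M.map Prod.fst).sum = n}

/-- `a c n` is the number of generalized cubic partitions of `n` with `c` colors. -/
noncomputable def a (c n : ℕ) : ℕ := (cubicPartitionSet c n).ncard

/-!
Splitting off the parts of color `≥ c` and lowering their colors by `c` gives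
`a (c + p) N = ∑_{m + n = N} e m * a c n` with `e m = (evenPartitionSet p m).ncard`, the number
of partitions of `m` into even parts in `p` colors. Rotating all colors cyclically permutes these
partitions with order `p`, and a fixed partition contains each part equally often in every
color, so its size is divisible by `p`. Hence `p ∣ e m` unless `p ∣ m` (the combinatorial form
of `(1 - q^{2j})^{-p} ≡ (1 - q^{2pj})^{-1} mod p`). For `N = pn + r` with `r < p` the surviving
terms have `m = pt` and second index `p(n - t) + r`, so induction on `k`, with `c = kp - 1`,
finishes.
-/

open Finset

theorem Finset.prime_dvd_card_of_iterate {α : Type*} {p : ℕ} (hp : p.Prime) {σ : α → α}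
    {s : Finset α} (hmaps : Set.MapsTo σ s s) (hper : ∀ x ∈ s, σ^[p] x = x)
    (hfree : ∀ x ∈ s, σ x ≠ x) : p ∣ #s := by
  classical
  have := Fact.mk hp
  let f : Function.End s := hmaps.restrict
  have hf : f ^ p ^ 1 = 1 := by
    refine funext fun x => Subtype.ext ?_
    rw [pow_one]
    change ((hmaps.restrict σ s s)^[p] x : α) = x
    rw [hmaps.iterate_restrict]
    exact hper x x.2
  have : IsEmpty f.fixedPoints := ⟨fun x => hfree _ x.1.2 (congrArg Subtype.val x.2)⟩
  have hmod := Equiv.Perm.card_fixedPoints_modEq hf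
  rwa [Fintype.card_coe, Fintype.card_eq_zero (α := f.fixedPoints),
    Nat.modEq_zero_iff_dvd] at hmod

theorem Finset.prime_dvd_sum_of_iterate {α : Type*} {p : ℕ} (hp : p.Prime) {σ : α → α}
    {s : Finset α} (hmaps : Set.MapsTo σ s s) (hper : ∀ x ∈ s, σ^[p] x = x)
    (hfree : ∀ x ∈ s, σ x ≠ x) {w : α → ℕ} (hw : ∀ x ∈ s, w (σ x) = w x) :
    p ∣ ∑ x ∈ s, w x := by
  classical
  -- each level set `{x ∈ s | w x = b}` is `σ`-stable
  change p ∣ ∑ x ∈ s, id (w x)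
  rw [Finset.sum_comp]
  refine Finset.dvd_sum fun b _ => Dvd.dvd.mul_right ?_ b
  refine prime_dvd_card_of_iterate hp (fun x hx => ?_) (fun x hx => hper x (mem_filter.1 hx).1)
    (fun x hx => hfree x (mem_filter.1 hx).1)
  obtain ⟨hxs, rfl⟩ := mem_filter.1 hx
  exact mem_filter.2 ⟨hmaps hxs, hw x hxs⟩

theorem Multiset.map_iterate {α : Type*} (f : α → α) (n : ℕ) (M : Multiset α) :
    (Multiset.map f)^[n] M = M.map f^[n] := by
  induction n generalizing M with
  | zero => simp
  | succ n ih => rw [Function.iterate_succ_apply, ih, Multiset.map_map, Function.iterate_succ]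

theorem Multiset.map_fst_map_prodMap_id {α β γ : Type*} (g : β → γ)
    (M : Multiset (α × β)) :
    (M.map (Prod.map id g)).map Prod.fst = M.map Prod.fst := by
  rw [Multiset.map_map]
  rfl

theorem Multiset.card_le_sum_map_fst {α : Type*} {M : Multiset (ℕ × α)}
    (hpos : ∀ x ∈ M, 0 < x.1) : card M ≤ (M.map Prod.fst).sum := by
  simpa using Multiset.card_nsmul_le_sum (s := M.map Prod.fst) (a := 1) fun y hy => by
    obtain ⟨x, hx, rfl⟩ := Multiset.mem_map.1 hy
    exact hpos x hx

theorem Nat.eq_mul_sub_add_of_mul_add_eq {p n r t m : ℕ} (hr : r < p)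
    (h : p * t + m = p * n + r) : m = p * (n - t) + r := by
  have ht : t ≤ n := by
    by_contra! hlt
    nlinarith
  obtain ⟨d, rfl⟩ := Nat.exists_eq_add_of_le ht
  rw [Nat.add_sub_cancel_left]
  linarith

theorem finite_setOf_sum_map_fst_eq (c n : ℕ) :
    {M : Multiset (ℕ × ℕ) |
      (∀ x ∈ M, 0 < x.1 ∧ x.2 < c) ∧ (M.map Prod.fst).sum = n}.Finite := by
  refine (Set.finite_Iic (n • (range (n + 1) ×ˢ range c).val)).subset ?_
  rintro M ⟨hM, rfl⟩
  rw [Set.mem_Iic, Multiset.le_iff_count]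
  intro x
  by_cases hx : x ∈ M
  · have hx1 : x.1 ≤ (M.map Prod.fst).sum :=
      Multiset.le_sum_of_mem (Multiset.mem_map_of_mem _ hx)
    rw [Multiset.count_nsmul, Multiset.count_eq_one_of_mem (nodup _)
      (mem_product.2 ⟨mem_range.2 (by omega), mem_range.2 (hM x hx).2⟩), mul_one]
    exact (Multiset.count_le_card x M).trans
      (Multiset.card_le_sum_map_fst fun x hx => (hM x hx).1)
  · simp [Multiset.count_eq_zero_of_notMem hx]

theorem cubicPartitionSet_finite (c n : ℕ) : (cubicPartitionSet c n).Finite :=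
  (finite_setOf_sum_map_fst_eq (c + 1) n).subset fun _ ⟨hM, hsum⟩ =>
    ⟨fun x hx => ⟨(hM x hx).1, by have := (hM x hx).2; split_ifs at this <;> omega⟩, hsum⟩

def evenPartitionSet (c n : ℕ) : Set (Multiset (ℕ × ℕ)) :=
  {M | (∀ x ∈ M, 0 < x.1 ∧ Even x.1 ∧ x.2 < c) ∧ (M.map Prod.fst).sum = n}

theorem evenPartitionSet_finite (c n : ℕ) : (evenPartitionSet c n).Finite :=
  (finite_setOf_sum_map_fst_eq c n).subset fun _ ⟨hM, hsum⟩ =>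
    ⟨fun x hx => ⟨(hM x hx).1, (hM x hx).2.2⟩, hsum⟩

def rotateColor (p : ℕ) : ℕ × ℕ → ℕ × ℕ := Prod.map id fun i => (i + 1) % p

theorem rotateColor_iterate {p : ℕ} {x : ℕ × ℕ} (hx : x.2 < p) (t : ℕ) :
    (rotateColor p)^[t] x = (x.1, (x.2 + t) % p) := by
  induction t with
  | zero => simp [Nat.mod_eq_of_lt hx]
  | succ t ih =>
    rw [Function.iterate_succ_apply', ih]
    simp [rotateColor, add_assoc]

theorem rotateColor_iterate_self {p : ℕ} {x : ℕ × ℕ} (hx : x.2 < p) :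
    (rotateColor p)^[p] x = x := by
  rw [rotateColor_iterate hx, Nat.add_mod_right, Nat.mod_eq_of_lt hx]

theorem rotateColor_ne_self {p : ℕ} (hp : 2 ≤ p) {x : ℕ × ℕ} (hx : x.2 < p) :
    rotateColor p x ≠ x := by
  intro h
  have h2 : (x.2 + 1) % p = x.2 := congrArg Prod.snd h
  rcases Nat.lt_or_ge (x.2 + 1) p with hlt | hge
  · rw [Nat.mod_eq_of_lt hlt] at h2
    omega
  · rw [show x.2 + 1 = p by omega, Nat.mod_self] at h2
    omega

theorem rotateColor_injOn (p : ℕ) : Set.InjOn (rotateColor p) {x | x.2 < p} := by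
  refine Set.LeftInvOn.injOn (f₁' := (rotateColor p)^[p - 1]) fun x (hx : x.2 < p) => ?_
  rw [← Function.iterate_succ_apply, Nat.succ_eq_add_one, Nat.sub_add_cancel (by omega),
    rotateColor_iterate_self hx]

theorem prime_dvd_sum_map_fst_of_map_rotateColor {p : ℕ} (hp : p.Prime)
    {M : Multiset (ℕ × ℕ)} (hM : ∀ x ∈ M, x.2 < p) (hfix : M.map (rotateColor p) = M) :
    p ∣ (M.map Prod.fst).sum := by
  classical
  have hmem : ∀ x ∈ M, rotateColor p x ∈ M := fun x hx =>
    hfix ▸ Multiset.mem_map_of_mem _ hx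
  rw [Finset.sum_multiset_map_count]
  refine prime_dvd_sum_of_iterate hp (σ := rotateColor p)
    (fun x hx => Multiset.mem_toFinset.2 (hmem x (Multiset.mem_toFinset.1 hx)))
    (fun x hx => rotateColor_iterate_self (hM x (Multiset.mem_toFinset.1 hx)))
    (fun x hx => rotateColor_ne_self hp.two_le (hM x (Multiset.mem_toFinset.1 hx))) ?_
  intro x hx
  rw [Multiset.mem_toFinset] at hx
  rw [← Multiset.count_map_eq_count _ M ((rotateColor_injOn p).mono hM) x hx, hfix]
  rfl

theorem map_rotateColor_mem_evenPartitionSet {p n : ℕ} (hp : 0 < p) {M : Multiset (ℕ × ℕ)}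
    (hM : M ∈ evenPartitionSet p n) : M.map (rotateColor p) ∈ evenPartitionSet p n := by
  obtain ⟨hparts, hsum⟩ := hM
  refine ⟨fun y hy => ?_, by rw [rotateColor, Multiset.map_fst_map_prodMap_id, hsum]⟩
  obtain ⟨x, hx, rfl⟩ := Multiset.mem_map.1 hy
  exact ⟨(hparts x hx).1, (hparts x hx).2.1, Nat.mod_lt _ hp⟩

theorem prime_dvd_ncard_evenPartitionSet {p m : ℕ} (hp : p.Prime) (hm : ¬p ∣ m) :
    p ∣ (evenPartitionSet p m).ncard := by
  have hfin := evenPartitionSet_finite p m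
  rw [Set.ncard_eq_toFinset_card _ hfin]
  refine prime_dvd_card_of_iterate hp (σ := Multiset.map (rotateColor p)) ?_ ?_ ?_
  · intro M hM
    rw [Finset.mem_coe, Set.Finite.mem_toFinset] at hM ⊢
    exact map_rotateColor_mem_evenPartitionSet hp.pos hM
  · intro M hM
    rw [Set.Finite.mem_toFinset] at hM
    rw [Multiset.map_iterate, Multiset.map_congr rfl fun x hx =>
      rotateColor_iterate_self (hM.1 x hx).2.2, Multiset.map_id']
  · intro M hM hfix
    rw [Set.Finite.mem_toFinset] at hM
    exact hm (hM.2 ▸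
      prime_dvd_sum_map_fst_of_map_rotateColor hp (fun x hx => (hM.1 x hx).2.2) hfix)

section Convolution

variable {c p : ℕ}

theorem Multiset.filter_lt_map_add {α : Type*} {M₁ M₀ : Multiset (α × ℕ)}
    (h₀ : ∀ x ∈ M₀, x.2 < c) :
    (M₁.map (Prod.map id (· + c)) + M₀).filter (·.2 < c) = M₀ := by
  rw [Multiset.filter_add, Multiset.filter_eq_self.2 h₀, Multiset.filter_eq_nil.2, zero_add]
  exact Multiset.forall_mem_map_iff.2 fun x _ => by simp

theorem Multiset.filter_not_lt_map_add {α : Type*} {M₁ M₀ : Multiset (α × ℕ)}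
    (h₀ : ∀ x ∈ M₀, x.2 < c) :
    (M₁.map (Prod.map id (· + c)) + M₀).filter (¬ ·.2 < c) =
      M₁.map (Prod.map id (· + c)) := by
  rw [Multiset.filter_add, Multiset.filter_eq_self.2, Multiset.filter_eq_nil.2 fun x hx =>
    not_not.2 (h₀ x hx), add_zero]
  exact Multiset.forall_mem_map_iff.2 fun x _ => by simp

theorem color_lt_of_mem_cubicPartitionSet (hc : 1 ≤ c) {n : ℕ} {M : Multiset (ℕ × ℕ)}
    (hM : M ∈ cubicPartitionSet c n) : ∀ x ∈ M, x.2 < c := fun x hx => by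
  have := (hM.1 x hx).2
  split_ifs at this <;> omega

theorem map_add_mem_cubicPartitionSet {m n : ℕ} {M₁ M₀ : Multiset (ℕ × ℕ)}
    (h₁ : M₁ ∈ evenPartitionSet p m) (h₀ : M₀ ∈ cubicPartitionSet c n) :
    M₁.map (Prod.map id (· + c)) + M₀ ∈ cubicPartitionSet (c + p) (m + n) := by
  obtain ⟨hparts₁, hsum₁⟩ := h₁
  obtain ⟨hparts₀, hsum₀⟩ := h₀
  refine ⟨fun y hy => ?_, ?_⟩
  · rcases Multiset.mem_add.1 hy with hy | hy
    · obtain ⟨x, hx, rfl⟩ := Multiset.mem_map.1 hy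
      obtain ⟨hpos, heven, hlt⟩ := hparts₁ x hx
      exact ⟨hpos, by simp only [Prod.map_fst, Prod.map_snd, id, if_pos heven]; omega⟩
    · obtain ⟨hpos, hcolor⟩ := hparts₀ y hy
      exact ⟨hpos, by split_ifs at hcolor ⊢ <;> omega⟩
  · rw [Multiset.map_add, Multiset.sum_add, Multiset.map_fst_map_prodMap_id, hsum₁, hsum₀]

theorem filter_lt_mem_cubicPartitionSet {N : ℕ} {M : Multiset (ℕ × ℕ)}
    (hM : M ∈ cubicPartitionSet (c + p) N) :
    M.filter (·.2 < c) ∈ cubicPartitionSet c ((M.filter (·.2 < c)).map Prod.fst).sum := by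
  refine ⟨fun x hx => ?_, rfl⟩
  obtain ⟨hxM, hlt⟩ := Multiset.mem_filter.1 hx
  obtain ⟨hpos, hcolor⟩ := hM.1 x hxM
  exact ⟨hpos, by split_ifs at hcolor ⊢ <;> omega⟩

theorem map_filter_not_lt_mem_evenPartitionSet (hc : 1 ≤ c) {N : ℕ} {M : Multiset (ℕ × ℕ)}
    (hM : M ∈ cubicPartitionSet (c + p) N) :
    (M.filter (¬ ·.2 < c)).map (Prod.map id (· - c)) ∈
      evenPartitionSet p ((M.filter (¬ ·.2 < c)).map Prod.fst).sum := by
  refine ⟨fun y hy => ?_, by rw [Multiset.map_fst_map_prodMap_id]⟩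
  obtain ⟨x, hx, rfl⟩ := Multiset.mem_map.1 hy
  obtain ⟨hxM, hge⟩ := Multiset.mem_filter.1 hx
  obtain ⟨hpos, hcolor⟩ := hM.1 x hxM
  split_ifs at hcolor with heven
  · exact ⟨hpos, heven, by simp only [Prod.map_snd]; omega⟩
  · omega

theorem a_add_eq_sum_antidiagonal (hc : 1 ≤ c) (N : ℕ) :
    a (c + p) N = ∑ x ∈ antidiagonal N, (evenPartitionSet p x.1).ncard * a c x.2 := by
  classical
  simp only [a, Set.ncard_eq_toFinset_card _ (cubicPartitionSet_finite _ _),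
    Set.ncard_eq_toFinset_card _ (evenPartitionSet_finite _ _), ← card_product, ← card_sigma]
  refine card_nbij' (fun M => ⟨(((M.filter (¬ ·.2 < c)).map Prod.fst).sum,
      ((M.filter (·.2 < c)).map Prod.fst).sum),
      ((M.filter (¬ ·.2 < c)).map (Prod.map id (· - c)), M.filter (·.2 < c))⟩)
    (fun x => x.2.1.map (Prod.map id (· + c)) + x.2.2) ?_ ?_ ?_ ?_
  · intro M hM
    simp only [coe_sigma, Set.mem_sigma_iff, mem_coe, HasAntidiagonal.mem_antidiagonal,
      mem_product, Set.Finite.mem_toFinset, Set.Finite.coe_toFinset] at hM ⊢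
    refine ⟨?_, map_filter_not_lt_mem_evenPartitionSet hc hM,
      filter_lt_mem_cubicPartitionSet hM⟩
    rw [← Multiset.sum_add, ← Multiset.map_add, add_comm, Multiset.filter_add_not, hM.2]
  · rintro ⟨⟨m, n⟩, M₁, M₀⟩ hx
    simp only [coe_sigma, Set.mem_sigma_iff, mem_coe, HasAntidiagonal.mem_antidiagonal,
      mem_product, Set.Finite.mem_toFinset, Set.Finite.coe_toFinset] at hx ⊢
    exact hx.1 ▸ map_add_mem_cubicPartitionSet hx.2.1 hx.2.2
  · intro M _
    have hinv : ∀ x ∈ M.filter (¬ ·.2 < c),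
        (Prod.map id (· + c) ∘ Prod.map id (· - c)) x = x :=
      fun x hx => Prod.ext rfl (Nat.sub_add_cancel (not_lt.1 (Multiset.mem_filter.1 hx).2))
    dsimp only
    rw [Multiset.map_map, Multiset.map_congr rfl hinv, Multiset.map_id', add_comm,
      Multiset.filter_add_not]
  · rintro ⟨⟨m, n⟩, M₁, M₀⟩ hx
    simp only [coe_sigma, Set.mem_sigma_iff, mem_coe, mem_product, Set.Finite.mem_toFinset] at hx
    obtain ⟨-, h₁, h₀⟩ := hx
    have hlow := color_lt_of_mem_cubicPartitionSet hc h₀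
    dsimp only
    rw [Multiset.filter_lt_map_add hlow, Multiset.filter_not_lt_map_add hlow,
      Multiset.map_fst_map_prodMap_id, h₁.2, h₀.2, Multiset.map_map,
      show Prod.map id (· - c) ∘ Prod.map id (· + c) = id from
        funext fun x => Prod.ext rfl (Nat.add_sub_cancel x.2 c), Multiset.map_id]

end Convolution

theorem a_kp_pred_cong_general (p : ℕ) (hp : p.Prime) (r : ℕ)
    (hr2 : r ≤ p - 1)
    (h : ∀ n : ℕ, p ∣ a (p - 1) (p * n + r))
    (k : ℕ) (hk : 1 ≤ k) (n : ℕ) :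
    p ∣ a (k * p - 1) (p * n + r) := by
  have hr : r < p := Nat.lt_of_le_sub_one hp.pos hr2
  induction k, hk using Nat.le_induction generalizing n with
  | base => simpa using h n
  | succ k hk ih =>
    have hkp : 2 ≤ k * p := le_mul_of_one_le_of_le hk hp.two_le
    rw [show (k + 1) * p - 1 = (k * p - 1) + p by rw [add_one_mul]; omega,
      a_add_eq_sum_antidiagonal (by omega)]
    refine Finset.dvd_sum fun x hx => ?_
    by_cases hdvd : p ∣ x.1
    · obtain ⟨t, ht⟩ := hdvd
      rw [HasAntidiagonal.mem_antidiagonal, ht] at hx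
      rw [Nat.eq_mul_sub_add_of_mul_add_eq hr hx]
      exact (ih (n - t)).mul_left _
    · exact (prime_dvd_ncard_evenPartitionSet hp hdvd).mul_right _

/-- If `p ≥ 3` is prime, `1 ≤ r ≤ p-1`, and `a_{p-1}(pn+r) ≡ 0 (mod p)` for all `n`,
then for every `k ≥ 1` and all `n`, `a_{kp-1}(pn+r) ≡ 0 (mod p)`. -/
theorem a_kp_pred_cong (p : ℕ) (hp : p.Prime) (hp3 : 3 ≤ p) (r : ℕ)
    (hr1 : 1 ≤ r) (hr2 : r ≤ p - 1)
    (h : ∀ n : ℕ, p ∣ a (p - 1) (p * n + r))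
    (k : ℕ) (hk : 1 ≤ k) (n : ℕ) :
    p ∣ a (k * p - 1) (p * n + r) :=
  a_kp_pred_cong_general p hp r hr2 h k hk n
end
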